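/- Let p be an odd prime and let ℓ be an integer with 1 ≤ ℓ ≤ p − 1 such that the Legendre symbol ((4ℓ+1)/p) equals −1. Then for all integers n ≥ 0, b(2(pn + ℓ)) ≡ 0 (mod 4). -/

import Mathlib

/-!
Modulo 4 we have `(1 + x) / (1 - x) = 1 + 2x / (1 - x)`, and a product of factors `1 + 2yⱼ` is
`1 + 2 ∑ yⱼ`. Reading off coefficients, `b(N) ≡ D + 2T (mod 4)`, where `D` counts the solutions of
`2N + 1 = (2n + 1)(2v + 1)` and `T` counts the solutions of
`2N + 1 = (2n + 1)(2v + 1) + 2(2j + 1)(u + 1)` with `j < n`. When `2N + 1` is not a square,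
`D = 2Q` with `Q` the number of factorisations with `n < v`. The solutions counted by `T` carry an
involution which, for even `N`, has exactly `Q` fixed points, so `T ≡ Q (mod 2)` and
`b(N) ≡ 4Q ≡ 0 (mod 4)`. For `N = 2(pn + ℓ)`, `2N + 1 ≡ 4ℓ + 1 (mod p)` is a non-residue,
hence not a square.
-/

open PowerSeries Finset

/-- The `n`-th summand `q^n (−q;q²)_n / (q;q²)_{n+1}` of the second order mock theta
function `B(q)`, as a formal power series over `ℤ`.  The denominator
`(q;q²)_{n+1} = ∏_{j=0}^{n} (1 - q^{2j+1})` has constant coefficient `1`, hence is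
invertible; we use `PowerSeries.invOfUnit`. -/
noncomputable def mockBterm (n : ℕ) : PowerSeries ℤ :=
  (X : PowerSeries ℤ) ^ n
    * (∏ j ∈ range n, (1 + (X : PowerSeries ℤ) ^ (2 * j + 1)))
    * PowerSeries.invOfUnit (∏ j ∈ range (n + 1), (1 - (X : PowerSeries ℤ) ^ (2 * j + 1))) 1

/-- `B(q) = Σ_{n≥0} q^n (−q;q²)_n/(q;q²)_{n+1}`.  The `n`-th summand is divisible by
`q^n`, so the `N`-th coefficient of `B(q)` only receives contributions from the
summands with `n ≤ N`; this defines the (formal) infinite sum coefficientwise. -/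
noncomputable def mockB : PowerSeries ℤ :=
  PowerSeries.mk fun N => ∑ n ∈ range (N + 1), PowerSeries.coeff N (mockBterm n)

/-- `b n` is the coefficient of `q^n` in `B(q)`. -/
noncomputable def b (n : ℕ) : ℤ := PowerSeries.coeff n mockB

lemma prod_one_add_two_mul {R ι : Type*} [CommRing R] (h4 : (4 : R) = 0) (s : Finset ι)
    (f : ι → R) : ∏ i ∈ s, (1 + 2 * f i) = 1 + 2 * ∑ i ∈ s, f i := by
  classical
  induction s using Finset.induction_on with
  | empty => simp
  | insert i s hi ih =>
    rw [prod_insert hi, sum_insert hi, ih]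
    linear_combination (f i * ∑ i ∈ s, f i) * h4

lemma card_modEq_card_filter_apply_eq_self {α : Type*} [DecidableEq α] {s : Finset α}
    {σ : α → α} (hσ : ∀ a ∈ s, σ a ∈ s) (hσσ : ∀ a ∈ s, σ (σ a) = a) :
    #s ≡ #{a ∈ s | σ a = a} [MOD 2] := by
  have hmoved : ((#{a ∈ s | σ a ≠ a} : ℕ) : ZMod 2) = 0 := by
    rw [card_eq_sum_ones, Nat.cast_sum]
    refine sum_involution (fun a _ => σ a) (fun _ _ => by decide)
      (fun a ha _ => (mem_filter.mp ha).2) (fun a ha => ?_) (fun a ha => hσσ a (mem_filter.mp ha).1)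
    obtain ⟨has, hne⟩ := mem_filter.mp ha
    exact mem_filter.mpr ⟨hσ a has, fun h => hne (h.symm.trans (hσσ a has))⟩
  rw [← ZMod.natCast_eq_natCast_iff, ← card_filter_add_card_filter_not (fun a => σ a = a),
    Nat.cast_add, hmoved, add_zero]

noncomputable def geomSeries (R : Type*) [Semiring R] (e : ℕ) : R⟦X⟧ :=
  mk fun i => if e ∣ i then 1 else 0

section geomSeries

variable {R : Type*}

lemma geomSeries_eq_expand [CommRing R] {e : ℕ} (he : e ≠ 0) :
    geomSeries R e = expand e he (mk 1) := by
  ext i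
  simp [geomSeries, coeff_expand]

lemma one_sub_X_pow_mul_geomSeries [CommRing R] {e : ℕ} (he : e ≠ 0) :
    (1 - X ^ e) * geomSeries R e = 1 := by
  rw [geomSeries_eq_expand he, ← expand_X e he, ← map_one (expand e he), ← map_sub, ← map_mul,
    mul_comm, mk_one_mul_one_sub_eq_one, map_one]

lemma one_add_X_pow_mul_geomSeries [CommRing R] {e : ℕ} (he : e ≠ 0) :
    (1 + X ^ e) * geomSeries R e = 1 + 2 * (X ^ e * geomSeries R e) := by
  linear_combination one_sub_X_pow_mul_geomSeries (R := R) he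

lemma coeff_X_pow_mul_geomSeries [Semiring R] {a : ℕ} (ha : 0 < a) (k N : ℕ) :
    coeff N ((X : R⟦X⟧) ^ k * geomSeries R a) = #{v ∈ range (N + 1) | N = k + a * v} := by
  rw [coeff_X_pow_mul', geomSeries, coeff_mk]
  by_cases h : k ≤ N ∧ a ∣ N - k
  · obtain ⟨hk, c, hc⟩ := h
    have hfilter : {v ∈ range (N + 1) | N = k + a * v} = {c} := by
      ext v
      simp only [mem_filter, mem_range, mem_singleton]
      refine ⟨fun ⟨_, hv⟩ => Nat.eq_of_mul_eq_mul_left ha (by omega), ?_⟩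
      rintro rfl
      exact ⟨by have := Nat.le_mul_of_pos_left v ha; omega, by omega⟩
    simp [hk, hfilter, hc]
  · have hfilter : {v ∈ range (N + 1) | N = k + a * v} = ∅ :=
      filter_false_of_mem fun v _ hv => h ⟨by omega, v, by omega⟩
    rw [hfilter]
    by_cases hk : k ≤ N <;> simp_all

lemma coeff_X_pow_mul_geomSeries_mul_geomSeries [Semiring R] {a c : ℕ} (ha : 0 < a) (hc : 0 < c)
    (k N : ℕ) :
    coeff N ((X : R⟦X⟧) ^ k * (geomSeries R a * geomSeries R c)) =
      #{uv ∈ range (N + 1) ×ˢ range (N + 1) | N = k + a * uv.1 + c * uv.2} := by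
  rw [coeff_X_pow_mul']
  split_ifs with hk
  · simp only [coeff_mul, geomSeries, coeff_mk, ite_zero_mul_ite_zero, mul_one, sum_boole]
    congr 1
    refine card_nbij' (fun il => (il.1 / a, il.2 / c)) (fun uv => (a * uv.1, c * uv.2))
      ?_ ?_ ?_ ?_
    · rintro ⟨i, l⟩ hil
      simp only [coe_filter, HasAntidiagonal.mem_antidiagonal, Set.mem_ofPred_eq] at hil
      obtain ⟨hsum, ⟨i, rfl⟩, ⟨l, rfl⟩⟩ := hil
      simp only [coe_filter, mem_product, mem_range, Set.mem_ofPred_eq,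
        Nat.mul_div_cancel_left _ ha, Nat.mul_div_cancel_left _ hc]
      have := Nat.le_mul_of_pos_left i ha
      have := Nat.le_mul_of_pos_left l hc
      exact ⟨⟨by omega, by omega⟩, by omega⟩
    · rintro ⟨u, v⟩ huv
      simp only [coe_filter, mem_product, mem_range, Set.mem_ofPred_eq] at huv
      simp only [coe_filter, HasAntidiagonal.mem_antidiagonal, Set.mem_ofPred_eq]
      exact ⟨by omega, dvd_mul_right _ _, dvd_mul_right _ _⟩
    · rintro ⟨i, l⟩ hil
      simp only [coe_filter, HasAntidiagonal.mem_antidiagonal, Set.mem_ofPred_eq] at hil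
      simp [Nat.mul_div_cancel' hil.2.1, Nat.mul_div_cancel' hil.2.2]
    · rintro ⟨u, v⟩ -
      simp [Nat.mul_div_cancel_left _ ha, Nat.mul_div_cancel_left _ hc]
  · rw [filter_false_of_mem fun uv _ huv => hk (by omega), card_empty, Nat.cast_zero]

end geomSeries

lemma map_invOfUnit_eq {R S : Type*} [CommRing R] [CommRing S] (f : R →+* S) {φ : R⟦X⟧}
    (hφ : constantCoeff φ = 1) {ψ : S⟦X⟧} (hψ : map f φ * ψ = 1) :
    map f (invOfUnit φ 1) = ψ :=
  left_inv_eq_right_inv (by rw [← map_mul, invOfUnit_mul φ 1 (by simpa using hφ), map_one]) hψ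

lemma map_mockBterm {R : Type*} [CommRing R] (h4 : (4 : R) = 0) (n : ℕ) :
    map (Int.castRingHom R) (mockBterm n) =
      X ^ n * geomSeries R (2 * n + 1) *
        (1 + 2 * ∑ j ∈ range n, X ^ (2 * j + 1) * geomSeries R (2 * j + 1)) := by
  have hinv : map (Int.castRingHom R)
      (invOfUnit (∏ j ∈ range (n + 1), (1 - (X : ℤ⟦X⟧) ^ (2 * j + 1))) 1) =
        ∏ j ∈ range (n + 1), geomSeries R (2 * j + 1) := by
    refine map_invOfUnit_eq _ ?_ ?_
    · simp [map_prod]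
    · simp only [map_prod, map_sub, map_one, map_pow, map_X, ← prod_mul_distrib]
      exact prod_eq_one fun j _ => one_sub_X_pow_mul_geomSeries (by omega)
  calc map (Int.castRingHom R) (mockBterm n)
      = X ^ n * (∏ j ∈ range n, (1 + X ^ (2 * j + 1))) *
          ∏ j ∈ range (n + 1), geomSeries R (2 * j + 1) := by
        simp only [mockBterm, map_mul, hinv, map_prod, map_add, map_one, map_pow, map_X]
    _ = X ^ n * geomSeries R (2 * n + 1) *
          ∏ j ∈ range n, ((1 + X ^ (2 * j + 1)) * geomSeries R (2 * j + 1)) := by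
        rw [prod_range_succ, prod_mul_distrib]
        ring
    _ = _ := by
        rw [prod_congr rfl fun j _ => one_add_X_pow_mul_geomSeries (R := R) (e := 2 * j + 1)
          (by omega), prod_one_add_two_mul (by rw [← map_ofNat C 4, h4, map_zero])]

def pairSolutions (N : ℕ) : Finset (ℕ × ℕ) :=
  {nv ∈ range (N + 1) ×ˢ range (N + 1) | N = nv.1 + (2 * nv.1 + 1) * nv.2}

def quadSolutions (N : ℕ) : Finset ((ℕ × ℕ) × ℕ × ℕ) :=
  {x ∈ (range (N + 1) ×ˢ range (N + 1)) ×ˢ (range (N + 1) ×ˢ range (N + 1)) |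
    x.1.2 < x.1.1 ∧
      N = x.1.1 + (2 * x.1.2 + 1) + (2 * x.1.2 + 1) * x.2.1 + (2 * x.1.1 + 1) * x.2.2}

lemma mem_pairSolutions {N n v : ℕ} : (n, v) ∈ pairSolutions N ↔ N = n + (2 * n + 1) * v := by
  simp only [pairSolutions, mem_filter, mem_product, mem_range, and_iff_right_iff_imp]
  intro h
  have := Nat.le_mul_of_pos_left v (by omega : 0 < 2 * n + 1)
  omega

lemma mem_quadSolutions {N n j u v : ℕ} :
    ((n, j), (u, v)) ∈ quadSolutions N ↔
      j < n ∧ N = n + (2 * j + 1) + (2 * j + 1) * u + (2 * n + 1) * v := by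
  simp only [quadSolutions, mem_filter, mem_product, mem_range, and_iff_right_iff_imp]
  rintro ⟨hj, h⟩
  have := Nat.le_mul_of_pos_left u (by omega : 0 < 2 * j + 1)
  have := Nat.le_mul_of_pos_left v (by omega : 0 < 2 * n + 1)
  omega

lemma card_pairSolutions (N : ℕ) :
    #(pairSolutions N) = ∑ n ∈ range (N + 1), #{v ∈ range (N + 1) | N = n + (2 * n + 1) * v} := by
  simp only [pairSolutions, card_filter, sum_product]

lemma card_quadSolutions (N : ℕ) :
    #(quadSolutions N) = ∑ n ∈ range (N + 1), ∑ j ∈ range n,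
      #{uv ∈ range (N + 1) ×ˢ range (N + 1) |
        N = n + (2 * j + 1) + (2 * j + 1) * uv.1 + (2 * n + 1) * uv.2} := by
  rw [quadSolutions, card_filter, sum_product, sum_product]
  refine sum_congr rfl fun n hn => ?_
  have hrange : range n = {j ∈ range (N + 1) | j < n} := by
    ext j
    simp only [mem_range, mem_filter] at hn ⊢
    omega
  rw [hrange, sum_filter]
  refine sum_congr rfl fun j _ => ?_
  by_cases hj : j < n <;> simp only [hj, true_and, false_and, if_true, if_false, card_filter,
    sum_const_zero]

lemma intCast_b_eq {R : Type*} [CommRing R] (h4 : (4 : R) = 0) (N : ℕ) :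
    ((b N : ℤ) : R) = #(pairSolutions N) + 2 * #(quadSolutions N) := by
  have hcoeff : ∀ n ∈ range (N + 1), ((coeff N (mockBterm n) : ℤ) : R) =
      #{v ∈ range (N + 1) | N = n + (2 * n + 1) * v} + 2 * ∑ j ∈ range n,
        #{uv ∈ range (N + 1) ×ˢ range (N + 1) |
          N = n + (2 * j + 1) + (2 * j + 1) * uv.1 + (2 * n + 1) * uv.2} := by
    intro n _
    have hexpand : X ^ n * geomSeries R (2 * n + 1) *
        (1 + 2 * ∑ j ∈ range n, X ^ (2 * j + 1) * geomSeries R (2 * j + 1)) =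
          X ^ n * geomSeries R (2 * n + 1) + 2 * ∑ j ∈ range n,
            X ^ (n + (2 * j + 1)) * (geomSeries R (2 * j + 1) * geomSeries R (2 * n + 1)) := by
      simp only [mul_add, mul_one, mul_sum]
      exact congrArg _ (sum_congr rfl fun j _ => by ring)
    have hcoeff_two : ∀ f : R⟦X⟧, coeff N (2 * f) = 2 * coeff N f := fun f => by
      rw [two_mul, map_add, two_mul]
    rw [← eq_intCast (Int.castRingHom R), ← coeff_map, map_mockBterm h4, hexpand, map_add,
      hcoeff_two, map_sum, Nat.cast_sum, coeff_X_pow_mul_geomSeries (by omega)]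
    simp only [coeff_X_pow_mul_geomSeries_mul_geomSeries (R := R) (Nat.succ_pos _) (Nat.succ_pos _)]
  rw [b, mockB, coeff_mk, Int.cast_sum, sum_congr rfl hcoeff, sum_add_distrib, ← mul_sum,
    card_pairSolutions, card_quadSolutions]
  push_cast
  ring

lemma card_pairSolutions_eq_two_mul {N : ℕ} (hN : ¬IsSquare (2 * N + 1)) :
    #(pairSolutions N) = 2 * #{nv ∈ pairSolutions N | nv.1 < nv.2} := by
  have hswap : ∀ {n v : ℕ}, (n, v) ∈ pairSolutions N → (v, n) ∈ pairSolutions N := by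
    intro n v h
    rw [mem_pairSolutions] at h ⊢
    linarith
  have hne : ∀ {n v : ℕ}, (n, v) ∈ pairSolutions N → n ≠ v := by
    rintro n v h rfl
    exact hN ⟨2 * n + 1, by rw [mem_pairSolutions.mp h]; ring⟩
  rw [← card_filter_add_card_filter_not (fun nv : ℕ × ℕ => nv.1 < nv.2), two_mul]
  congr 1
  refine card_nbij' Prod.swap Prod.swap ?_ ?_ (fun _ _ => rfl) (fun _ _ => rfl)
  · rintro ⟨n, v⟩ h
    simp only [coe_filter, Set.mem_ofPred_eq, Prod.swap] at h ⊢
    exact ⟨hswap h.1, by have := hne h.1; omega⟩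
  · rintro ⟨n, v⟩ h
    simp only [coe_filter, Set.mem_ofPred_eq, Prod.swap] at h ⊢
    exact ⟨hswap h.1, by omega⟩

/-- With `2n + 1 = (2j + 1) + 2(k + 1)`, the equation of `quadSolutions` reads
`2N + 1 = (2j + 1)(2v + 1) + 2(k + 1)(2v + 1) + 2(2j + 1)(u + 1)`, symmetric under
`(j, k) ↔ (v, u)`. -/
def quadInvolution (x : (ℕ × ℕ) × ℕ × ℕ) : (ℕ × ℕ) × ℕ × ℕ :=
  ((x.2.1 + x.2.2 + 1, x.2.2), (x.1.1 - x.1.2 - 1, x.1.2))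

lemma quadInvolution_mem {N : ℕ} {x : (ℕ × ℕ) × ℕ × ℕ} (hx : x ∈ quadSolutions N) :
    quadInvolution x ∈ quadSolutions N := by
  obtain ⟨⟨n, j⟩, u, v⟩ := x
  obtain ⟨hjn, hN⟩ := mem_quadSolutions.mp hx
  obtain ⟨k, rfl⟩ : ∃ k, n = j + k + 1 := ⟨n - j - 1, by omega⟩
  rw [quadInvolution, show j + k + 1 - j - 1 = k by omega, mem_quadSolutions]
  exact ⟨by omega, by rw [hN]; ring⟩

lemma quadInvolution_quadInvolution {N : ℕ} {x : (ℕ × ℕ) × ℕ × ℕ} (hx : x ∈ quadSolutions N) :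
    quadInvolution (quadInvolution x) = x := by
  obtain ⟨⟨n, j⟩, u, v⟩ := x
  have hjn := (mem_quadSolutions.mp hx).1
  simp only [quadInvolution, Prod.mk.injEq, and_true]
  omega

lemma exists_snd_eq_of_mem_pairSolutions {N a b : ℕ} (hN : Even N) (h : (a, b) ∈ pairSolutions N)
    (hab : a < b) : ∃ w, b = a + 2 * w + 2 := by
  have hsum : N = a + b + 2 * (a * b) := by rw [mem_pairSolutions.mp h]; ring
  obtain ⟨r, hr⟩ := hN
  exact ⟨(b - a - 2) / 2, by omega⟩

lemma mem_fixedPoints_quadInvolution {N n j u v : ℕ} :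
    ((n, j), (u, v)) ∈ {x ∈ quadSolutions N | quadInvolution x = x} ↔
      v = j ∧ n = j + u + 1 ∧ N = j + (2 * j + 1) * (j + 2 * u + 2) := by
  rw [mem_filter, mem_quadSolutions]
  simp only [quadInvolution, Prod.mk.injEq]
  constructor
  · rintro ⟨⟨-, hN⟩, ⟨rfl, rfl⟩, -, -⟩
    exact ⟨rfl, by omega, by rw [hN]; ring⟩
  · rintro ⟨rfl, rfl, hN⟩
    exact ⟨⟨by omega, by rw [hN]; ring⟩, ⟨by omega, rfl⟩, by omega, rfl⟩

lemma card_fixedPoints_quadInvolution {N : ℕ} (hN : Even N) :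
    #{x ∈ quadSolutions N | quadInvolution x = x} = #{nv ∈ pairSolutions N | nv.1 < nv.2} := by
  refine card_nbij (fun x => (x.1.2, x.1.1 + x.2.1 + 1)) ?_ ?_ ?_
  · rintro ⟨⟨n, j⟩, u, v⟩ hx
    obtain ⟨rfl, rfl, hN⟩ := mem_fixedPoints_quadInvolution.mp hx
    simp only [coe_filter, Set.mem_ofPred_eq, mem_pairSolutions]
    exact ⟨by rw [hN]; ring, by omega⟩
  · rintro ⟨⟨n, j⟩, u, v⟩ hx ⟨⟨n', j'⟩, u', v'⟩ hx' heq
    obtain ⟨rfl, rfl, -⟩ := mem_fixedPoints_quadInvolution.mp hx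
    obtain ⟨rfl, rfl, -⟩ := mem_fixedPoints_quadInvolution.mp hx'
    simp only [Prod.mk.injEq] at heq ⊢
    omega
  · rintro ⟨a, b⟩ hab
    simp only [coe_filter, Set.mem_ofPred_eq] at hab
    obtain ⟨w, rfl⟩ := exists_snd_eq_of_mem_pairSolutions hN hab.1 hab.2
    refine ⟨((a + w + 1, a), (w, a)), mem_fixedPoints_quadInvolution.mpr ⟨rfl, rfl, ?_⟩,
      Prod.ext rfl (show a + w + 1 + w + 1 = a + 2 * w + 2 by omega)⟩
    linarith [mem_pairSolutions.mp hab.1]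

lemma four_dvd_b_of_even_of_not_isSquare {N : ℕ} (hN : Even N) (hsq : ¬IsSquare (2 * N + 1)) :
    (4 : ℤ) ∣ b N := by
  have hparity : #(quadSolutions N) ≡ #{nv ∈ pairSolutions N | nv.1 < nv.2} [MOD 2] := by
    rw [← card_fixedPoints_quadInvolution hN]
    exact card_modEq_card_filter_apply_eq_self (fun _ => quadInvolution_mem)
      (fun _ => quadInvolution_quadInvolution)
  obtain ⟨k, hk⟩ : Even (#{nv ∈ pairSolutions N | nv.1 < nv.2} + #(quadSolutions N)) := by
    unfold Nat.ModEq at hparity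
    exact Nat.even_iff.mpr (by omega)
  have hk' : ((#{nv ∈ pairSolutions N | nv.1 < nv.2} : ℕ) : ZMod 4) + #(quadSolutions N) =
      k + k := by
    rw [← Nat.cast_add, hk, Nat.cast_add]
  have h4 : (4 : ZMod 4) = 0 := by decide
  suffices h : ((b N : ℤ) : ZMod 4) = 0 by
    exact_mod_cast (ZMod.intCast_zmod_eq_zero_iff_dvd _ 4).mp h
  rw [intCast_b_eq h4, card_pairSolutions_eq_two_mul hsq, Nat.cast_mul, Nat.cast_two]
  linear_combination 2 * hk' + (k : ZMod 4) * h4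

lemma not_isSquare_add_mul_of_legendreSym_eq_neg_one {p : ℕ} [Fact p.Prime] {a : ℤ}
    (h : legendreSym p a = -1) (k : ℤ) : ¬IsSquare (a + p * k) := by
  rw [legendreSym.eq_neg_one_iff] at h
  intro hsq
  exact h (by simpa using hsq.map (Int.castRingHom (ZMod p)))

theorem b_two_pn_ell_general (p ℓ : ℕ) [Fact p.Prime]
    (hleg : legendreSym p (4 * (ℓ : ℤ) + 1) = -1) :
    ∀ n : ℕ, b (2 * (p * n + ℓ)) ≡ 0 [ZMOD 4] := by
  intro n
  have hsq : ¬IsSquare (2 * (2 * (p * n + ℓ)) + 1) := by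
    rintro ⟨r, hr⟩
    refine not_isSquare_add_mul_of_legendreSym_eq_neg_one hleg (4 * n) ⟨r, ?_⟩
    have hr' : ((2 * (2 * (p * n + ℓ)) + 1 : ℕ) : ℤ) = r * r := by exact_mod_cast hr
    push_cast at hr'
    linarith
  exact Int.modEq_zero_iff_dvd.mpr (four_dvd_b_of_even_of_not_isSquare (even_two_mul _) hsq)

/-- Let `p` be an odd prime and `1 ≤ ℓ ≤ p − 1` with `((4ℓ+1)/p) = −1`. Then for all
`n ≥ 0`, `b(2(pn + ℓ)) ≡ 0 (mod 4)`. -/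
theorem b_two_pn_ell (p ℓ : ℕ) [Fact p.Prime] (hodd : Odd p)
    (hl1 : 1 ≤ ℓ) (hl2 : ℓ ≤ p - 1)
    (hleg : legendreSym p (4 * (ℓ : ℤ) + 1) = -1) :
    ∀ n : ℕ, b (2 * (p * n + ℓ)) ≡ 0 [ZMOD 4] :=
  b_two_pn_ell_general p ℓ hleg
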